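/- arXiv:2210.06610 — 3 statements merged into one kernel-verified Lean document; each statement's English description precedes it below -/
import Mathlib

section
/- Let Z ⊆ [0,1]^d be a compact set, and let P be a probability measure on Z whose density f with respect to Lebesgue measure satisfies f(z) ≥ c > 0 for all z ∈ Z, with Z = [0,1]^d. Then for every L-Lipschitz function h : Z → [−R, R], one has sup_{z∈Z} |h(z)| ≤ (4/c)^{1/(d+2)} (2R + 2√d L)^{d/(d+2)} ‖h‖_{L²(P)}^{2/(d+2)}. -/
/-!
Let `M = |h z₀|` and `K = 2R + 2√d L`. With side `s = M / max M (2√d L) ∈ (0, 1]`, some cube of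
side `s` contains `z₀` and lies in `[0,1]^d`; its diameter is at most `√d s`, so the Lipschitz bound
gives `|h| ≥ M/2` on it, and it has `P`-mass at least `c s^d`. By Markov's inequality
`∫ h² dP ≥ (M/2)² c s^d`, and since `M ≤ K s` this yields `M^(d+2) ≤ (4/c) K^d ∫ h² dP`.
-/

open MeasureTheory Set

section Cube

variable {ι : Type*}

def cube (a : ι → ℝ) (s : ℝ) : Set (EuclideanSpace ℝ ι) :=
  {z | ∀ i, z i ∈ Icc (a i) (a i + s)}

theorem measurableSet_setOf_forall_mem_Icc [Fintype ι] (a b : ι → ℝ) :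
    MeasurableSet {z : EuclideanSpace ℝ ι | ∀ i, z i ∈ Icc (a i) (b i)} := by
  simp only [ofPred_forall]
  exact MeasurableSet.iInter fun i =>
    measurableSet_Icc.preimage (EuclideanSpace.proj (𝕜 := ℝ) i).continuous.measurable

theorem measurableSet_cube [Fintype ι] (a : ι → ℝ) (s : ℝ) : MeasurableSet (cube a s) :=
  measurableSet_setOf_forall_mem_Icc a fun i => a i + s

theorem volume_cube [Fintype ι] (a : ι → ℝ) (s : ℝ) :
    volume (cube a s) = ENNReal.ofReal s ^ Fintype.card ι := by
  have hpi : cube a s = (MeasurableEquiv.toLp 2 (ι → ℝ)).symm ⁻¹'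
      univ.pi fun i => Icc (a i) (a i + s) := by
    ext z
    simp only [cube, mem_ofPred_eq, mem_preimage, mem_univ_pi]
    rfl
  rw [hpi, (EuclideanSpace.volume_preserving_symm_measurableEquiv_toLp ι).measure_preimage
    (MeasurableSet.univ_pi fun _ => measurableSet_Icc).nullMeasurableSet, volume_pi_pi]
  simp [Real.volume_Icc]

theorem dist_le_of_mem_cube [Fintype ι] {a : ι → ℝ} {s : ℝ} (hs : 0 ≤ s) {z w : EuclideanSpace ℝ ι}
    (hz : z ∈ cube a s) (hw : w ∈ cube a s) : dist z w ≤ √(Fintype.card ι) * s := by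
  have hcoord : ∀ i, dist (z i) (w i) ^ 2 ≤ s ^ 2 := fun i => by
    gcongr
    simpa using Real.dist_le_of_mem_Icc (hz i) (hw i)
  calc dist z w = √(∑ i, dist (z i) (w i) ^ 2) := EuclideanSpace.dist_eq z w
    _ ≤ √(Fintype.card ι * s ^ 2) := by
      gcongr
      exact (Finset.sum_le_sum fun i _ => hcoord i).trans_eq (by simp)
    _ = √(Fintype.card ι) * s := by rw [Real.sqrt_mul (Nat.cast_nonneg _), Real.sqrt_sq hs]

/-- The corner `min (z i) (1 - s)` slides the cube back into `[0,1]^ι` when `z` is near the top. -/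
theorem exists_mem_cube_subset_unitCube {z : EuclideanSpace ℝ ι} (hz : ∀ i, z i ∈ Icc 0 1)
    {s : ℝ} (hs0 : 0 ≤ s) (hs1 : s ≤ 1) :
    ∃ a, z ∈ cube a s ∧ cube a s ⊆ {w | ∀ i, w i ∈ Icc 0 1} := by
  refine ⟨fun i => min (z i) (1 - s), fun i => ?_, fun w hw i => ?_⟩
  · have := (hz i).2
    constructor <;> cases min_cases (z i) (1 - s) <;> linarith
  · have := (hz i).1
    have := hw i
    simp only [mem_Icc] at this ⊢
    constructor <;> cases min_cases (z i) (1 - s) <;> linarith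

end Cube

theorem LipschitzOnWith.abs_sub_mul_dist_le {X : Type*} [PseudoMetricSpace X] {K : NNReal}
    {h : X → ℝ} {S : Set X} (hh : LipschitzOnWith K h S) {x y : X} (hx : x ∈ S) (hy : y ∈ S) :
    |h y| - K * dist x y ≤ |h x| := by
  have := hh.dist_le_mul x hx y hy
  rw [Real.dist_eq] at this
  linarith [abs_sub_abs_le_abs_sub (h y) (h x), abs_sub_comm (h x) (h y)]

theorem ofReal_mul_le_withDensity_restrict_apply {X : Type*} [MeasurableSpace X]
    {μ : Measure X} {Z Q : Set X} {f : X → ℝ} {c : ℝ} (hf : ∀ z ∈ Z, c ≤ f z)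
    (hQ : MeasurableSet Q) (hQZ : Q ⊆ Z) :
    ENNReal.ofReal c * μ Q ≤ (μ.restrict Z).withDensity (fun z => ENNReal.ofReal (f z)) Q := by
  rw [withDensity_apply _ hQ, Measure.restrict_restrict hQ, inter_eq_self_of_subset_left hQZ,
    ← setLIntegral_const]
  exact setLIntegral_mono' hQ fun z hz => ENNReal.ofReal_le_ofReal (hf z (hQZ hz))

theorem integrable_sq_of_continuousOn_of_abs_le {X : Type*} [TopologicalSpace X]
    [MeasurableSpace X] [OpensMeasurableSpace X] [SecondCountableTopology X] {μ : Measure X}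
    [IsFiniteMeasure μ] {S : Set X} {h : X → ℝ} {R : ℝ} (hS : MeasurableSet S) (hμS : ∀ᵐ x ∂μ, x ∈ S)
    (hh : ContinuousOn h S) (hbd : ∀ x ∈ S, |h x| ≤ R) :
    Integrable (fun x => h x ^ 2) μ := by
  have hmeas : AEStronglyMeasurable h μ := by
    simpa [Measure.restrict_eq_self_of_ae_mem hμS] using hh.aestronglyMeasurable (μ := μ) hS
  refine Integrable.of_bound (hmeas.pow 2) (R ^ 2) (hμS.mono fun x hx => ?_)
  rw [Real.norm_eq_abs, abs_pow]
  exact pow_le_pow_left₀ (abs_nonneg _) (hbd x hx) 2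

theorem exists_side_length {M A K : ℝ} (hM : 0 < M) (hK : max M (2 * A) ≤ K) :
    ∃ s, 0 < s ∧ s ≤ 1 ∧ 2 * A * s ≤ M ∧ M ≤ K * s := by
  have hm : 0 < max M (2 * A) := lt_max_of_lt_left hM
  have hcancel : max M (2 * A) * (M / max M (2 * A)) = M := mul_div_cancel₀ M hm.ne'
  have hs : 0 < M / max M (2 * A) := div_pos hM hm
  refine ⟨M / max M (2 * A), hs, div_le_one_of_le₀ (le_max_left _ _) hm.le, ?_, ?_⟩
  · calc 2 * A * (M / max M (2 * A)) ≤ max M (2 * A) * (M / max M (2 * A)) := by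
          gcongr; exact le_max_right _ _
      _ = M := hcancel
  · calc M = max M (2 * A) * (M / max M (2 * A)) := hcancel.symm
      _ ≤ K * (M / max M (2 * A)) := by gcongr

theorem pow_add_two_le_of_sq_mul_pow_le {n : ℕ} {M K s c I : ℝ} (hM : 0 ≤ M) (hK : 0 ≤ K)
    (hc : 0 < c) (hMK : M ≤ K * s) (hI : (M / 2) ^ 2 * (c * s ^ n) ≤ I) :
    M ^ (n + 2) ≤ 4 / c * K ^ n * I :=
  calc M ^ (n + 2) = M ^ n * M ^ 2 := pow_add M n 2
    _ ≤ (K * s) ^ n * M ^ 2 := by gcongr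
    _ = 4 / c * K ^ n * ((M / 2) ^ 2 * (c * s ^ n)) := by field_simp; ring
    _ ≤ 4 / c * K ^ n * I := by gcongr

theorem le_rpow_of_pow_add_two_le {n : ℕ} {M a b I : ℝ} (hM : 0 ≤ M) (ha : 0 ≤ a) (hb : 0 ≤ b)
    (hI : 0 ≤ I) (h : M ^ (n + 2) ≤ a * b ^ n * I) :
    M ≤ a ^ ((1 : ℝ) / (n + 2)) * b ^ ((n : ℝ) / (n + 2)) * I ^ ((1 : ℝ) / (n + 2)) := by
  have hn : (0 : ℝ) < n + 2 := by positivity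
  calc M = (M ^ (n + 2)) ^ ((1 : ℝ) / (n + 2)) := by
        rw [← Real.rpow_natCast, ← Real.rpow_mul hM]; push_cast
        rw [mul_one_div_cancel hn.ne', Real.rpow_one]
    _ ≤ (a * b ^ n * I) ^ ((1 : ℝ) / (n + 2)) := by gcongr
    _ = a ^ ((1 : ℝ) / (n + 2)) * b ^ ((n : ℝ) / (n + 2)) * I ^ ((1 : ℝ) / (n + 2)) := by
        rw [Real.mul_rpow (by positivity) hI, Real.mul_rpow ha (by positivity),
          ← Real.rpow_natCast b n, ← Real.rpow_mul hb, mul_one_div]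

theorem stmt_2_general (d : ℕ) (c R : ℝ) (L : NNReal) (hc : 0 < c)
    (Z : Set (EuclideanSpace ℝ (Fin d)))
    (hZ : Z = {z | ∀ i, z i ∈ Set.Icc (0 : ℝ) 1})
    (f : EuclideanSpace ℝ (Fin d) → ℝ)
    (hf : ∀ z ∈ Z, c ≤ f z)
    (P : Measure (EuclideanSpace ℝ (Fin d))) [IsProbabilityMeasure P]
    (hPf : P = (volume.restrict Z).withDensity (fun z => ENNReal.ofReal (f z)))
    (h : EuclideanSpace ℝ (Fin d) → ℝ)
    (hLip : LipschitzOnWith L h Z)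
    (hbd : ∀ z ∈ Z, |h z| ≤ R) :
    ∀ z ∈ Z, |h z| ≤
      (4 / c) ^ ((1 : ℝ) / (d + 2)) * (2 * R + 2 * Real.sqrt d * L) ^ ((d : ℝ) / (d + 2)) *
        (∫ z, (h z) ^ 2 ∂P) ^ ((1 : ℝ) / (d + 2)) := by
  intro z₀ hz₀
  set M := |h z₀|
  have hM0 : 0 ≤ M := abs_nonneg _
  have hMR : M ≤ R := hbd z₀ hz₀
  have hA : 0 ≤ √d * L := by positivity
  have hK : max M (2 * (√d * L)) ≤ 2 * R + 2 * √d * L := max_le (by linarith) (by linarith)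
  have hK0 : 0 ≤ 2 * R + 2 * √d * L := hM0.trans ((le_max_left _ _).trans hK)
  have hI0 : 0 ≤ ∫ z, h z ^ 2 ∂P := integral_nonneg fun z => sq_nonneg _
  refine le_rpow_of_pow_add_two_le hM0 (by positivity) hK0 hI0 ?_
  rcases hM0.eq_or_lt with hM | hM
  · rw [← hM, zero_pow (by omega)]
    positivity
  obtain ⟨s, hs0, hs1, hsA, hsK⟩ := exists_side_length hM hK
  obtain ⟨a, hz₀Q, hQZ⟩ := exists_mem_cube_subset_unitCube (hZ ▸ hz₀) hs0.le hs1
  rw [← hZ] at hQZ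
  have hZmeas : MeasurableSet Z := hZ ▸ measurableSet_setOf_forall_mem_Icc 0 1
  have haeZ : ∀ᵐ z ∂P, z ∈ Z :=
    hPf ▸ (withDensity_absolutelyContinuous _ _).ae_le (ae_restrict_mem hZmeas)
  have hhalf : cube a s ⊆ {z | (M / 2) ^ 2 ≤ h z ^ 2} := fun z hz => by
    have hLz := hLip.abs_sub_mul_dist_le (hQZ hz) hz₀
    have hdist := dist_le_of_mem_cube hs0.le hz hz₀Q
    rw [Fintype.card_fin] at hdist
    have : (L : ℝ) * dist z z₀ ≤ M / 2 := by
      linarith [mul_le_mul_of_nonneg_left hdist L.coe_nonneg]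
    rw [mem_ofPred_eq, ← sq_abs (h z)]
    gcongr
    linarith
  have hPQ : c * s ^ d ≤ P.real (cube a s) := by
    have := ofReal_mul_le_withDensity_restrict_apply (μ := volume) hf (measurableSet_cube a s) hQZ
    rw [← hPf, volume_cube, Fintype.card_fin, ← ENNReal.ofReal_pow hs0.le,
      ← ENNReal.ofReal_mul hc.le] at this
    exact (ENNReal.ofReal_le_iff_le_toReal (measure_ne_top _ _)).1 this
  have hMarkov : (M / 2) ^ 2 * P.real (cube a s) ≤ ∫ z, h z ^ 2 ∂P :=
    (mul_le_mul_of_nonneg_left (measureReal_mono hhalf) (by positivity)).trans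
      (mul_meas_ge_le_integral_of_nonneg (ae_of_all _ fun z => sq_nonneg _)
        (integrable_sq_of_continuousOn_of_abs_le hZmeas haeZ hLip.continuousOn hbd) _)
  exact pow_add_two_le_of_sq_mul_pow_le hM0 hK0 hc hsK (hMarkov.trans' (by gcongr))

/-- If `P` has density `f ≥ c > 0` w.r.t. Lebesgue measure on the cube `Z = [0,1]^d`,
then every `L`-Lipschitz (w.r.t. the Euclidean norm) function `h : Z → [−R,R]` satisfies
`sup_{z∈Z} |h(z)| ≤ (4/c)^{1/(d+2)} (2R + 2√d L)^{d/(d+2)} ‖h‖_{L²(P)}^{2/(d+2)}`. -/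
theorem stmt_2 (d : ℕ) (c R : ℝ) (L : NNReal) (hc : 0 < c) (hR : 0 ≤ R)
    (Z : Set (EuclideanSpace ℝ (Fin d)))
    (hZ : Z = {z | ∀ i, z i ∈ Set.Icc (0 : ℝ) 1})
    (f : EuclideanSpace ℝ (Fin d) → ℝ)
    (hf : ∀ z ∈ Z, c ≤ f z)
    (P : Measure (EuclideanSpace ℝ (Fin d))) [IsProbabilityMeasure P]
    (hPf : P = (volume.restrict Z).withDensity (fun z => ENNReal.ofReal (f z)))
    (h : EuclideanSpace ℝ (Fin d) → ℝ)
    (hLip : LipschitzOnWith L h Z)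
    (hbd : ∀ z ∈ Z, |h z| ≤ R) :
    ∀ z ∈ Z, |h z| ≤
      (4 / c) ^ ((1 : ℝ) / (d + 2)) * (2 * R + 2 * Real.sqrt d * L) ^ ((d : ℝ) / (d + 2)) *
        (∫ z, (h z) ^ 2 ∂P) ^ ((1 : ℝ) / (d + 2)) :=
  stmt_2_general d c R L hc Z hZ f hf P hPf h hLip hbd
end

section
/- Let A = [−1,1]^d with the uniform probability distribution, and define α̃(a) = max(1 − 2Σᵢ|aᵢ|, 0). Then ∫_A α̃(a)² dP(a) ≤ 2^{−d}, while α̃(0) = 1. Consequently any constant M satisfying α̃(0)² ≤ M ‖α̃‖²_{L²(P)} must satisfy M ≥ 2^d. -/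
open MeasureTheory Set

/-!
The tent `α̃` takes values in `[0, 1]` and vanishes outside the cube `[-1/2, 1/2]^d`, since a
single coordinate with `|aᵢ| > 1/2` already makes `1 - 2 Σ |aⱼ|` negative. Hence `α̃²` is dominated
by the indicator of that cube, which has Lebesgue measure `1`, so its `P`-integral is at most
`2^{-d}`; together with `α̃(0) = 1` this forces `M ≥ 2^d`.
-/

section Tent

variable {ι : Type*} [Fintype ι]

/-- The paper's `α̃`, supported on the `ℓ¹`-ball of radius `1/2`. -/
noncomputable def tent (a : ι → ℝ) : ℝ := max (1 - ∑ i, 2 * |a i|) 0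

def halfCube : Set (ι → ℝ) := univ.pi fun _ => Icc (-(1 / 2)) (1 / 2)

lemma tent_nonneg (a : ι → ℝ) : 0 ≤ tent a := le_max_right _ _

lemma tent_le_one (a : ι → ℝ) : tent a ≤ 1 := by
  refine max_le ?_ zero_le_one
  have : 0 ≤ ∑ i, 2 * |a i| := Finset.sum_nonneg fun i _ => by positivity
  linarith

@[simp]
lemma tent_zero : tent (0 : ι → ℝ) = 1 := by simp [tent]

lemma tent_eq_zero_of_notMem_halfCube {a : ι → ℝ} (ha : a ∉ halfCube) : tent a = 0 := by
  obtain ⟨i, hi⟩ : ∃ i, 1 / 2 < |a i| := by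
    simpa only [halfCube, mem_univ_pi, mem_Icc, ← abs_le, not_forall, not_le] using ha
  have hsum : 2 * |a i| ≤ ∑ j, 2 * |a j| :=
    Finset.single_le_sum (f := fun j => 2 * |a j|) (fun j _ => by positivity) (Finset.mem_univ i)
  exact max_eq_right (by linarith)

lemma sq_tent_le_indicator_halfCube (a : ι → ℝ) : tent a ^ 2 ≤ halfCube.indicator 1 a := by
  by_cases ha : a ∈ halfCube
  · rw [indicator_of_mem ha, Pi.one_apply]
    exact pow_le_one₀ (tent_nonneg a) (tent_le_one a)
  · rw [indicator_of_notMem ha, tent_eq_zero_of_notMem_halfCube ha]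
    norm_num

lemma measurableSet_halfCube : MeasurableSet (halfCube : Set (ι → ℝ)) :=
  MeasurableSet.univ_pi fun _ => measurableSet_Icc

lemma volume_halfCube : volume (halfCube : Set (ι → ℝ)) = 1 := by
  rw [halfCube, volume_pi_pi]
  norm_num [Real.volume_Icc]

end Tent

lemma integral_le_measureReal_of_le_indicator {X : Type*} [MeasurableSpace X] {μ : Measure X}
    {f : X → ℝ} {s : Set X} (hs : MeasurableSet s) (hμs : μ s ≠ ⊤) (hf₀ : 0 ≤ f)
    (hfs : f ≤ s.indicator 1) : ∫ x, f x ∂μ ≤ μ.real s := by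
  have hind : Integrable (s.indicator 1) μ :=
    (integrable_indicator_iff hs).mpr (integrableOn_const (C := (1 : ℝ)) hμs)
  calc ∫ x, f x ∂μ ≤ ∫ x, s.indicator 1 x ∂μ :=
        integral_mono_of_nonneg (.of_forall hf₀) hind (.of_forall hfs)
    _ = μ.real s := integral_indicator_one hs

lemma integral_sq_tent_restrict_le_one {ι : Type*} [Fintype ι] (S : Set (ι → ℝ)) :
    ∫ a, tent a ^ 2 ∂volume.restrict S ≤ 1 := by
  have hfin : volume.restrict S halfCube ≠ ⊤ :=
    ((Measure.restrict_apply_le S _).trans_lt (by simp [volume_halfCube])).ne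
  calc ∫ a, tent a ^ 2 ∂volume.restrict S
      ≤ (volume.restrict S).real halfCube :=
        integral_le_measureReal_of_le_indicator measurableSet_halfCube hfin
          (fun a => sq_nonneg _) sq_tent_le_indicator_halfCube
    _ ≤ volume.real (halfCube : Set (ι → ℝ)) :=
        ENNReal.toReal_mono (by simp [volume_halfCube]) (Measure.restrict_apply_le S _)
    _ = 1 := by simp [measureReal_def, volume_halfCube]

lemma le_of_one_le_mul_of_le_inv {c I M : ℝ} (hc : 0 < c) (hI₀ : 0 ≤ I) (hI : I ≤ c⁻¹)
    (h : 1 ≤ M * I) : c ≤ M := by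
  have hM : 0 ≤ M := by
    by_contra! hM
    nlinarith [mul_nonpos_of_nonpos_of_nonneg hM.le hI₀]
  have := h.trans (mul_le_mul_of_nonneg_left hI hM)
  rwa [← div_eq_mul_inv, le_div_iff₀ hc, one_mul] at this

/-- On `A = [−1,1]^d` with the uniform distribution `P`, the function
`α̃(a) = max(1 − 2Σᵢ|aᵢ|, 0)` satisfies `∫ α̃² dP ≤ 2^{−d}` and `α̃(0) = 1`; hence any
`M` with `α̃(0)² ≤ M ‖α̃‖²_{L²(P)}` must satisfy `M ≥ 2^d`. -/
theorem stmt_11 (d : ℕ) (P : Measure (Fin d → ℝ))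
    (hP : P = (ENNReal.ofReal ((2 : ℝ) ^ d))⁻¹ •
      (volume.restrict {a : Fin d → ℝ | ∀ i, |a i| ≤ 1}))
    (α : (Fin d → ℝ) → ℝ)
    (hα : α = fun a => max (1 - ∑ i, 2 * |a i|) 0) :
    (∫ a, (α a) ^ 2 ∂P ≤ 1 / 2 ^ d) ∧ α 0 = 1 ∧
      ∀ M : ℝ, (α 0) ^ 2 ≤ M * ∫ a, (α a) ^ 2 ∂P → (2 : ℝ) ^ d ≤ M := by
  obtain rfl : α = tent := hα
  have h2d : (0 : ℝ) < 2 ^ d := by positivity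
  have hI : ∫ a, tent a ^ 2 ∂P ≤ 1 / 2 ^ d := by
    rw [hP, integral_smul_measure, ENNReal.toReal_inv, ENNReal.toReal_ofReal h2d.le, smul_eq_mul,
      one_div]
    exact mul_le_of_le_one_right (by positivity) (integral_sq_tent_restrict_le_one _)
  refine ⟨hI, tent_zero, fun M hM => ?_⟩
  rw [tent_zero, one_pow] at hM
  exact le_of_one_le_mul_of_le_inv h2d (integral_nonneg fun a => sq_nonneg _)
    (by rwa [one_div] at hI) hM
end

section
/- Let Y, A, X, U be random variables such that Y = Y^{(a)} on the event {A = a} (no interference), Y^{(a)} ⊥ A | U (conditional exchangeability), and X satisfies P(Y | A, U, X) = P(Y | A, U) and P(A | U, X) = P(A | X) (X is a back-door variable blocking U → A). Then E[Y^{(a)}] = E_X[ E[Y | A = a, X] ] when all variables are discrete with positive joint probabilities. -/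
open Finset

/-- Unnormalized sum of `f` over the event `E`. -/
private noncomputable def bdS {Ω : Type*} [Fintype Ω] (E : Ω → Prop) (f : Ω → ℝ) : ℝ :=
  ∑ ω, Set.indicator {ω' | E ω'} f ω

open Classical in
private lemma bdS_def {Ω : Type*} [Fintype Ω] (E : Ω → Prop) (f : Ω → ℝ) :
    bdS E f = ∑ ω, if E ω then f ω else 0 := by
  unfold bdS
  exact Finset.sum_congr rfl fun ω _ => by simp [Set.indicator_apply, Set.mem_setOf_eq]

private lemma bdS_univ {Ω : Type*} [Fintype Ω] (f : Ω → ℝ) :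
    bdS (fun _ => True) f = ∑ ω, f ω := by
  classical
  rw [bdS_def]; simp

private lemma bdS_congr {Ω : Type*} [Fintype Ω] {E : Ω → Prop} {f g : Ω → ℝ}
    (h : ∀ ω, E ω → f ω = g ω) : bdS E f = bdS E g := by
  classical
  rw [bdS_def, bdS_def]
  refine Finset.sum_congr rfl fun ω _ => ?_
  by_cases hE : E ω
  · simp [hE, h ω hE]
  · simp [hE]

private lemma bdS_eq_zero {Ω : Type*} [Fintype Ω] {E : Ω → Prop} {f : Ω → ℝ}
    (h : ∀ ω, E ω → f ω = 0) : bdS E f = 0 := by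
  classical
  rw [bdS_def]
  refine Finset.sum_eq_zero fun ω _ => ?_
  by_cases hE : E ω
  · simp [hE, h ω hE]
  · simp [hE]

private lemma bdS_nonneg {Ω : Type*} [Fintype Ω] {E : Ω → Prop} {f : Ω → ℝ}
    (h : ∀ ω, 0 ≤ f ω) : 0 ≤ bdS E f := by
  classical
  rw [bdS_def]
  exact Finset.sum_nonneg fun ω _ => by by_cases hE : E ω <;> simp [hE, h ω]

private lemma bdS_zero {Ω : Type*} [Fintype Ω] {E : Ω → Prop} {f : Ω → ℝ}
    (h : bdS E f = 0) (hf : ∀ ω, 0 ≤ f ω) : ∀ ω, E ω → f ω = 0 := by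
  classical
  intro ω hω
  rw [bdS_def] at h
  have h0 : ∀ ω' ∈ Finset.univ, (0:ℝ) ≤ if E ω' then f ω' else 0 := by
    intro ω' _; by_cases hE : E ω' <;> simp [hE, hf ω']
  have := (Finset.sum_eq_zero_iff_of_nonneg h0).mp h ω (Finset.mem_univ ω)
  simpa [hω] using this

/-- partition of an event according to the value of `g`. -/
private lemma bdS_part {Ω V : Type*} [Fintype Ω] [Fintype V]
    (F : Ω → ℝ) (g : Ω → V) (E : Ω → Prop) (E' : V → Ω → Prop)
    (h : ∀ v ω, E' v ω ↔ (E ω ∧ g ω = v)) :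
    bdS E F = ∑ v, bdS (E' v) F := by
  classical
  simp only [bdS_def]
  rw [Finset.sum_comm]
  refine Finset.sum_congr rfl fun ω _ => ?_
  simp only [h, ite_and]
  by_cases hE : E ω
  · simp [hE, Finset.sum_ite_eq]
  · simp [hE]

/-- expectation over an event as a sum over values. -/
private lemma bdS_val {Ω : Type*} [Fintype Ω] (p f : Ω → ℝ) (E : Ω → Prop) :
    bdS E (fun ω => p ω * f ω) =
      ∑ s ∈ Finset.image f Finset.univ, s * bdS (fun ω => f ω = s ∧ E ω) p := by
  classical
  simp only [bdS_def]
  simp only [Finset.mul_sum]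
  rw [Finset.sum_comm]
  refine Finset.sum_congr rfl fun ω _ => ?_
  simp only [ite_and, mul_ite, mul_zero]
  by_cases hE : E ω
  · simp only [hE, if_true]
    rw [Finset.sum_ite_eq (Finset.image f Finset.univ) (f ω) (fun s => s * p ω)]
    simp [mul_comm]
  · simp [hE]

/-- lifting multiplied-out value-level identities to expectation level. -/
private lemma bdS_lift {Ω : Type*} [Fintype Ω] (p f : Ω → ℝ) (E E' : Ω → Prop) (c c' : ℝ)
    (h : ∀ s : ℝ, bdS (fun ω => f ω = s ∧ E ω) p * c = bdS (fun ω => f ω = s ∧ E' ω) p * c') :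
    bdS E (fun ω => p ω * f ω) * c = bdS E' (fun ω => p ω * f ω) * c' := by
  rw [bdS_val p f E, bdS_val p f E', Finset.sum_mul, Finset.sum_mul]
  exact Finset.sum_congr rfl fun s _ => by linear_combination s * h s

/-- Back-door adjustment (Pearl 1995), discrete case.  On a finite probability space with
weights `p`, given potential outcomes `Ypot a`, treatment `A`, back-door variable `X`,
hidden confounder `U` and observed outcome `Y` such that: `Y = Y^{(A)}` (no interference),
`Y^{(a)} ⊥ A | U` (conditional exchangeability), `P(Y | A,U,X) = P(Y | A,U)` and
`P(A | U,X) = P(A | X)` (the back-door conditions, stated in multiplied-out form), and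
`P(A=a, X=x) > 0` for all `(a,x)`, we have
`E[Y^{(a)}] = E_X[E[Y | A=a, X]] = Σ_x P(X=x) · g(a,x)`. -/
theorem stmt_12 (Ω 𝒜 𝒳 𝒰 : Type*) [Fintype Ω] [Fintype 𝒜] [Fintype 𝒳] [Fintype 𝒰]
    (p : Ω → ℝ) (hp : ∀ ω, 0 ≤ p ω) (hp1 : ∑ ω, p ω = 1)
    (Pr : (Ω → Prop) → ℝ) (hPr : ∀ E, Pr E = ∑ ω, Set.indicator {ω' | E ω'} p ω)
    (A : Ω → 𝒜) (X : Ω → 𝒳) (U : Ω → 𝒰) (Y : Ω → ℝ) (Ypot : 𝒜 → Ω → ℝ)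
    -- no interference
    (hni : ∀ ω, Y ω = Ypot (A ω) ω)
    -- conditional exchangeability: Y^{(a)} ⊥ A | U
    (hexch : ∀ (a : 𝒜) (s : ℝ) (a' : 𝒜) (u : 𝒰),
      Pr (fun ω => Ypot a ω = s ∧ A ω = a' ∧ U ω = u) * Pr (fun ω => U ω = u) =
        Pr (fun ω => Ypot a ω = s ∧ U ω = u) * Pr (fun ω => A ω = a' ∧ U ω = u))
    -- P(Y | A, U, X) = P(Y | A, U)
    (hYX : ∀ (y : ℝ) (a : 𝒜) (u : 𝒰) (x : 𝒳),
      Pr (fun ω => Y ω = y ∧ A ω = a ∧ U ω = u ∧ X ω = x) * Pr (fun ω => A ω = a ∧ U ω = u) =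
        Pr (fun ω => Y ω = y ∧ A ω = a ∧ U ω = u) *
          Pr (fun ω => A ω = a ∧ U ω = u ∧ X ω = x))
    -- P(A | U, X) = P(A | X)
    (hAX : ∀ (a : 𝒜) (u : 𝒰) (x : 𝒳),
      Pr (fun ω => A ω = a ∧ U ω = u ∧ X ω = x) * Pr (fun ω => X ω = x) =
        Pr (fun ω => A ω = a ∧ X ω = x) * Pr (fun ω => U ω = u ∧ X ω = x))
    -- positivity
    (hpos : ∀ (a : 𝒜) (x : 𝒳), 0 < Pr (fun ω => A ω = a ∧ X ω = x)) :
    ∀ a : 𝒜,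
      ∑ ω, p ω * Ypot a ω =
        ∑ x : 𝒳, Pr (fun ω => X ω = x) *
          ((∑ ω, Set.indicator {ω' | A ω' = a ∧ X ω' = x} (fun ω' => p ω' * Y ω') ω) /
            Pr (fun ω => A ω = a ∧ X ω = x)) := by
  intro a
  have hPrS : ∀ E : Ω → Prop, bdS E p = Pr E := fun E => (hPr E).symm
  have hnum : ∀ x : 𝒳,
      (∑ ω, Set.indicator {ω' | A ω' = a ∧ X ω' = x} (fun ω' => p ω' * Y ω') ω) =
        bdS (fun ω => A ω = a ∧ X ω = x) (fun ω' => p ω' * Y ω') := fun _ => rfl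
  simp only [← hPrS] at hexch hYX hAX hpos
  simp only [← hPrS, hnum]
  -- no interference at expectation level
  have hni' : ∀ E : Ω → Prop,
      bdS (fun ω => A ω = a ∧ E ω) (fun ω => p ω * Y ω) =
        bdS (fun ω => A ω = a ∧ E ω) (fun ω => p ω * Ypot a ω) :=
    fun E => bdS_congr fun ω h => by rw [hni ω, h.1]
  -- F1 : exchangeability at expectation level
  have F1 : ∀ u : 𝒰,
      bdS (fun ω => A ω = a ∧ U ω = u) (fun ω => p ω * Y ω) * bdS (fun ω => U ω = u) p =
        bdS (fun ω => U ω = u) (fun ω => p ω * Ypot a ω) *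
          bdS (fun ω => A ω = a ∧ U ω = u) p := by
    intro u
    rw [hni' (fun ω => U ω = u)]
    exact bdS_lift p (Ypot a) (fun ω => A ω = a ∧ U ω = u) (fun ω => U ω = u) _ _
      (fun s => hexch a s a u)
  -- F2 : P(Y|A,U,X)=P(Y|A,U) at expectation level
  have F2 : ∀ (u : 𝒰) (x : 𝒳),
      bdS (fun ω => A ω = a ∧ U ω = u ∧ X ω = x) (fun ω => p ω * Y ω) *
          bdS (fun ω => A ω = a ∧ U ω = u) p =
        bdS (fun ω => A ω = a ∧ U ω = u) (fun ω => p ω * Y ω) *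
          bdS (fun ω => A ω = a ∧ U ω = u ∧ X ω = x) p :=
    fun u x => bdS_lift p Y (fun ω => A ω = a ∧ U ω = u ∧ X ω = x)
      (fun ω => A ω = a ∧ U ω = u) _ _ (fun y => hYX y a u x)
  -- marginalizations
  have hqm : ∀ u : 𝒰, bdS (fun ω => U ω = u) p =
      ∑ x, bdS (fun ω => U ω = u ∧ X ω = x) p :=
    fun u => bdS_part p X (fun ω => U ω = u) (fun x ω => U ω = u ∧ X ω = x)
      (fun v ω => by tauto)
  have hN : ∀ x : 𝒳, bdS (fun ω => A ω = a ∧ X ω = x) (fun ω => p ω * Y ω) =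
      ∑ u, bdS (fun ω => A ω = a ∧ U ω = u ∧ X ω = x) (fun ω => p ω * Y ω) :=
    fun x => bdS_part (fun ω => p ω * Y ω) U (fun ω => A ω = a ∧ X ω = x)
      (fun u ω => A ω = a ∧ U ω = u ∧ X ω = x) (fun v ω => by tauto)
  have htot : (∑ ω, p ω * Ypot a ω) =
      ∑ u, bdS (fun ω => U ω = u) (fun ω => p ω * Ypot a ω) := by
    rw [← bdS_univ (fun ω => p ω * Ypot a ω)]
    exact bdS_part (fun ω => p ω * Ypot a ω) U (fun _ => True)
      (fun u ω => U ω = u) (fun v ω => by simp)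
  -- key per-u identity
  have hkey : ∀ u : 𝒰,
      (∑ x, (bdS (fun ω => X ω = x) p / bdS (fun ω => A ω = a ∧ X ω = x) p) *
          bdS (fun ω => A ω = a ∧ U ω = u ∧ X ω = x) (fun ω => p ω * Y ω)) =
        bdS (fun ω => U ω = u) (fun ω => p ω * Ypot a ω) := by
    intro u
    by_cases hr : bdS (fun ω => A ω = a ∧ U ω = u) p = 0
    · -- degenerate case: everything vanishes
      have hpz : ∀ ω, A ω = a ∧ U ω = u → p ω = 0 := bdS_zero hr hp
      have hc0 : ∀ x : 𝒳, bdS (fun ω => A ω = a ∧ U ω = u ∧ X ω = x) p = 0 :=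
        fun x => bdS_eq_zero fun ω h => hpz ω ⟨h.1, h.2.1⟩
      have hm0 : ∀ x : 𝒳, bdS (fun ω => U ω = u ∧ X ω = x) p = 0 := by
        intro x
        have h3 := hAX a u x
        rw [hc0 x, zero_mul] at h3
        exact (mul_eq_zero.mp h3.symm).resolve_left (ne_of_gt (hpos a x))
      have hq0 : bdS (fun ω => U ω = u) p = 0 := by
        rw [hqm u]; exact Finset.sum_eq_zero fun x _ => hm0 x
      have hpz' : ∀ ω, U ω = u → p ω = 0 := bdS_zero hq0 hp
      have hrhs : bdS (fun ω => U ω = u) (fun ω => p ω * Ypot a ω) = 0 :=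
        bdS_eq_zero fun ω h => by rw [hpz' ω h, zero_mul]
      have hlhs : ∀ x : 𝒳,
          bdS (fun ω => A ω = a ∧ U ω = u ∧ X ω = x) (fun ω => p ω * Y ω) = 0 :=
        fun x => bdS_eq_zero fun ω h => by rw [hpz ω ⟨h.1, h.2.1⟩, zero_mul]
      rw [hrhs]
      exact Finset.sum_eq_zero fun x _ => by rw [hlhs x, mul_zero]
    · -- main case
      have hterm : ∀ x : 𝒳,
          (bdS (fun ω => X ω = x) p / bdS (fun ω => A ω = a ∧ X ω = x) p) *
              bdS (fun ω => A ω = a ∧ U ω = u ∧ X ω = x) (fun ω => p ω * Y ω) =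
            bdS (fun ω => A ω = a ∧ U ω = u) (fun ω => p ω * Y ω) *
              bdS (fun ω => U ω = u ∧ X ω = x) p / bdS (fun ω => A ω = a ∧ U ω = u) p := by
        intro x
        have h2 := F2 u x
        have h3 := hAX a u x
        have hD : bdS (fun ω => A ω = a ∧ X ω = x) p ≠ 0 := ne_of_gt (hpos a x)
        field_simp
        linear_combination (bdS (fun ω => X ω = x) p) * h2 +
          (bdS (fun ω => A ω = a ∧ U ω = u) (fun ω => p ω * Y ω)) * h3
      calc (∑ x, (bdS (fun ω => X ω = x) p / bdS (fun ω => A ω = a ∧ X ω = x) p) *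
              bdS (fun ω => A ω = a ∧ U ω = u ∧ X ω = x) (fun ω => p ω * Y ω))
          = ∑ x, bdS (fun ω => A ω = a ∧ U ω = u) (fun ω => p ω * Y ω) *
              bdS (fun ω => U ω = u ∧ X ω = x) p / bdS (fun ω => A ω = a ∧ U ω = u) p :=
            Finset.sum_congr rfl fun x _ => hterm x
        _ = bdS (fun ω => A ω = a ∧ U ω = u) (fun ω => p ω * Y ω) *
              bdS (fun ω => U ω = u) p / bdS (fun ω => A ω = a ∧ U ω = u) p := by
            rw [hqm u, Finset.mul_sum, Finset.sum_div]
        _ = bdS (fun ω => U ω = u) (fun ω => p ω * Ypot a ω) := by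
            rw [F1 u, mul_div_assoc, div_self hr, mul_one]
  -- put everything together
  calc ∑ ω, p ω * Ypot a ω
      = ∑ u, bdS (fun ω => U ω = u) (fun ω => p ω * Ypot a ω) := htot
    _ = ∑ u, ∑ x, (bdS (fun ω => X ω = x) p / bdS (fun ω => A ω = a ∧ X ω = x) p) *
          bdS (fun ω => A ω = a ∧ U ω = u ∧ X ω = x) (fun ω => p ω * Y ω) :=
        Finset.sum_congr rfl fun u _ => (hkey u).symm
    _ = ∑ x, ∑ u, (bdS (fun ω => X ω = x) p / bdS (fun ω => A ω = a ∧ X ω = x) p) *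
          bdS (fun ω => A ω = a ∧ U ω = u ∧ X ω = x) (fun ω => p ω * Y ω) :=
        Finset.sum_comm
    _ = ∑ x : 𝒳, bdS (fun ω => X ω = x) p *
          (bdS (fun ω => A ω = a ∧ X ω = x) (fun ω' => p ω' * Y ω') /
            bdS (fun ω => A ω = a ∧ X ω = x) p) := by
        refine Finset.sum_congr rfl fun x _ => ?_
        rw [hN x, Finset.sum_div, Finset.mul_sum]
        exact Finset.sum_congr rfl fun u _ => by ring
end
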